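/- Assume D is barreled (the paper assumes D complete and reflexive; reflexive locally convex spaces are barreled). Let (ξ_n)_{n≥1} be a topological basis of D and suppose there exists a continuous linear map S : D[t] → D^×[t^×] such that (Sξ_n)(ξ_k) = δ_{nk} for all n,k ≥ 1. Then (ξ_n) is a Riesz-like basis: there exists an injective continuous linear map T : D[t] → H such that (Tξ_n)_{n≥1} is an orthonormal basis of H; moreover, if f = Σ_{k=1}^∞ a_k ξ_k ∈ D then (Sf)(f) = Σ_{k=1}^∞ |a_k|² and ‖Tf‖² = Σ_{k=1}^∞ |a_k|². -/

import Mathlib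

/-!
Pairing the expansion `f = ∑ a k • ξ k` with the coefficient functionals `S (·) (ξ k)` and with
`S f` gives `a k = S f (ξ k)` and `S f f = ∑ ‖a k‖²`. Hence `f ↦ (S f (ξ k))ₖ` maps `D` into `ℓ²`,
and sending it through an `ℕ`-indexed Hilbert basis of `H` (which exists because `H` is separable
and infinite-dimensional) defines `T`. `T` is continuous by Banach–Steinhaus: `D` is barrelled and
`T` is the pointwise limit of the finite partial sums `∑ S f (ξ k) • b k`.
-/

open Filter Topology

noncomputable section

/-- Convergence of a series (sequence of partial sums) in a topological space. -/
def SeriesTendsTo {E : Type*} [AddCommMonoid E] [TopologicalSpace E] (a : ℕ → E) (f : E) : Prop :=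
  Tendsto (fun N => ∑ n ∈ Finset.range N, a n) atTop (𝓝 f)

/-- `ξ` is a topological basis of `D`: every `f ∈ D` has a unique expansion `f = Σ a n • ξ n`
converging in `D`. -/
def IsTopBasisSeq {E : Type*} [AddCommGroup E] [Module ℂ E] [TopologicalSpace E]
    (ξ : ℕ → E) : Prop :=
  ∀ f : E, ∃! a : ℕ → ℂ, SeriesTendsTo (fun n => a n • ξ n) f

/-- A sequence in an inner product space is an orthonormal basis (sequence) if it is orthonormal
and has dense linear span. -/
def IsONBasisSeq {K : Type*} [NormedAddCommGroup K] [InnerProductSpace ℂ K] (e : ℕ → K) : Prop :=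
  Orthonormal ℂ e ∧ Dense ((Submodule.span ℂ (Set.range e) : Submodule ℂ K) : Set K)

open scoped lp

section HilbertBasis

variable {ι 𝕜 E : Type*} [RCLike 𝕜] [NormedAddCommGroup E] [InnerProductSpace 𝕜 E]

theorem Orthonormal.dist_eq_sqrt_two {v : ι → E} (hv : Orthonormal 𝕜 v) {i j : ι} (hij : i ≠ j) :
    dist (v i) (v j) = √2 := by
  have hsq : ‖v i - v j‖ ^ 2 = 2 := by
    rw [@norm_sub_sq 𝕜, hv.inner_eq_zero hij, hv.norm_eq_one, hv.norm_eq_one]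
    norm_num
  rw [dist_eq_norm, ← hsq, Real.sqrt_sq (norm_nonneg _)]

theorem Orthonormal.countable [TopologicalSpace.SeparableSpace E] {v : ι → E}
    (hv : Orthonormal 𝕜 v) : Countable ι := by
  refine Pairwise.countable_of_isOpen_disjoint (s := fun i => Metric.ball (v i) (1 / 2))
    (fun i j hij => Metric.ball_disjoint_ball ?_) (fun _ => Metric.isOpen_ball)
    (fun i => ⟨v i, Metric.mem_ball_self (by norm_num)⟩)
  rw [hv.dist_eq_sqrt_two hij, Real.le_sqrt (by norm_num) (by norm_num)]
  norm_num

theorem HilbertBasis.infinite (b : HilbertBasis ι 𝕜 E) (h : ¬ FiniteDimensional 𝕜 E) :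
    Infinite ι := by
  by_contra hfin
  have := not_infinite_iff_finite.mp hfin
  have := Fintype.ofFinite ι
  exact h (.of_basis b.toOrthonormalBasis.toBasis)

theorem exists_hilbertBasis_nat [CompleteSpace E] [TopologicalSpace.SeparableSpace E]
    (h : ¬ FiniteDimensional 𝕜 E) : Nonempty (HilbertBasis ℕ 𝕜 E) := by
  obtain ⟨w, b, -⟩ := exists_hilbertBasis 𝕜 E
  have : Countable w := b.orthonormal.countable
  have : Infinite w := b.infinite h
  obtain ⟨e⟩ : Nonempty (ℕ ≃ w) := nonempty_equiv_of_countable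
  refine ⟨HilbertBasis.mk (b.orthonormal.comp e e.injective) ?_⟩
  rw [Set.range_comp, e.range_eq_univ, Set.image_univ, b.dense_span]

theorem HilbertBasis.hasSum_norm_sq_repr_symm (b : HilbertBasis ι 𝕜 E) (x : ℓ²(ι, 𝕜)) :
    HasSum (fun i => ‖x i‖ ^ 2) (‖b.repr.symm x‖ ^ 2) := by
  simpa [Real.rpow_two] using lp.hasSum_norm (p := 2) (by norm_num) x

end HilbertBasis

theorem HilbertBasis.isONBasisSeq {E : Type*} [NormedAddCommGroup E] [InnerProductSpace ℂ E]
    (b : HilbertBasis ℕ ℂ E) : IsONBasisSeq b :=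
  ⟨b.orthonormal, Submodule.dense_iff_topologicalClosure_eq_top.mpr b.dense_span⟩

section Synthesis

variable {ι 𝕜 D H : Type*} [RCLike 𝕜] [Countable ι]
  [AddCommGroup D] [Module 𝕜 D] [TopologicalSpace D] [IsTopologicalAddGroup D]
  [ContinuousSMul 𝕜 D] [BarrelledSpace 𝕜 D]
  [NormedAddCommGroup H] [InnerProductSpace 𝕜 H]
  (b : HilbertBasis ι 𝕜 H) (φ : ι → StrongDual 𝕜 D) (hφ : ∀ x, Memℓp (fun i => φ i x) 2)

def HilbertBasis.synthesisCLM : D →L[𝕜] H :=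
  letI := IsTopologicalAddGroup.rightUniformSpace D
  haveI := isUniformAddGroup_of_addCommGroup (G := D)
  continuousLinearMapOfTendsto (l := (SummationFilter.unconditional ι).filter)
    (fun s => ∑ i ∈ s, (φ i).smulRight (b i)) (f := fun x => b.repr.symm ⟨fun i => φ i x, hφ x⟩)
    <| tendsto_pi_nhds.mpr fun x => by
      simp only [sum_apply, ContinuousLinearMap.smulRight_apply]
      exact b.hasSum_repr_symm ⟨fun i => φ i x, hφ x⟩

theorem HilbertBasis.synthesisCLM_apply (x : D) :
    b.synthesisCLM φ hφ x = b.repr.symm ⟨fun i => φ i x, hφ x⟩ := rfl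

theorem HilbertBasis.hasSum_norm_sq_synthesisCLM (x : D) :
    HasSum (fun i => ‖φ i x‖ ^ 2) (‖b.synthesisCLM φ hφ x‖ ^ 2) := by
  rw [synthesisCLM_apply]
  exact b.hasSum_norm_sq_repr_symm ⟨fun i => φ i x, hφ x⟩

theorem HilbertBasis.synthesisCLM_injective (h : ∀ x, (∀ i, φ i x = 0) → x = 0) :
    Function.Injective (b.synthesisCLM φ hφ) := by
  refine (injective_iff_map_eq_zero _).mpr fun x hx => h x fun i => ?_
  rw [synthesisCLM_apply, LinearIsometryEquiv.map_eq_zero_iff] at hx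
  simpa using congrArg (· i) hx

theorem HilbertBasis.synthesisCLM_eq_of_biorthogonal [DecidableEq ι] {x : D} {j : ι}
    (h : ∀ i, φ i x = if j = i then 1 else 0) : b.synthesisCLM φ hφ x = b j := by
  rw [synthesisCLM_apply, ← b.repr_symm_single]
  congr 1
  ext i
  simp [h, lp.single_apply, Pi.single_apply, eq_comm]

end Synthesis

theorem SeriesTendsTo.map {E F 𝓕 : Type*} [AddCommMonoid E] [TopologicalSpace E]
    [AddCommMonoid F] [TopologicalSpace F] [FunLike 𝓕 E F] [AddMonoidHomClass 𝓕 E F]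
    {a : ℕ → E} {f : E} (h : SeriesTendsTo a f) (g : 𝓕) (hg : Continuous g) :
    SeriesTendsTo (fun n => g (a n)) (g f) := by
  simpa only [SeriesTendsTo, Function.comp_def, map_sum] using (hg.tendsto f).comp h

theorem SeriesTendsTo.hasSum_re_of_ofReal {x : ℕ → ℝ} (hx : ∀ n, 0 ≤ x n) {z : ℂ}
    (h : SeriesTendsTo (fun n => (x n : ℂ)) z) : HasSum x z.re ∧ (z.re : ℂ) = z := by
  have hre : Tendsto (fun N => ∑ n ∈ Finset.range N, x n) atTop (𝓝 z.re) := by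
    simpa [Function.comp_def] using (Complex.continuous_re.tendsto z).comp h
  refine ⟨(hasSum_iff_tendsto_nat_of_nonneg hx _).mpr hre, tendsto_nhds_unique ?_ h⟩
  simpa [Function.comp_def] using (Complex.continuous_ofReal.tendsto _).comp hre

def ContinuousLinearMap.evalRight {𝕜 E F : Type*} [RCLike 𝕜] {σ : 𝕜 →+* 𝕜}
    [AddCommGroup E] [Module 𝕜 E] [TopologicalSpace E] [IsTopologicalAddGroup E]
    [ContinuousSMul 𝕜 E] [AddCommGroup F] [Module 𝕜 F] [TopologicalSpace F]
    (S : F →L[𝕜] (E →SL[σ] 𝕜)) (x : E) : StrongDual 𝕜 F :=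
  (PointwiseConvergenceCLM.evalCLM σ 𝕜 x).comp ((toPointwiseConvergenceCLM 𝕜 σ E 𝕜).comp S)

@[simp]
theorem ContinuousLinearMap.evalRight_apply {𝕜 E F : Type*} [RCLike 𝕜] {σ : 𝕜 →+* 𝕜}
    [AddCommGroup E] [Module 𝕜 E] [TopologicalSpace E] [IsTopologicalAddGroup E]
    [ContinuousSMul 𝕜 E] [AddCommGroup F] [Module 𝕜 F] [TopologicalSpace F]
    (S : F →L[𝕜] (E →SL[σ] 𝕜)) (x : E) (f : F) : S.evalRight x f = S f x := rfl

section Biorthogonal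

variable {D : Type*} [AddCommGroup D] [Module ℂ D] [TopologicalSpace D] [IsTopologicalAddGroup D]
  [ContinuousSMul ℂ D] {ξ : ℕ → D} {S : D →L[ℂ] (D →SL[starRingEnd ℂ] ℂ)}
  (hbio : ∀ n k : ℕ, S (ξ n) (ξ k) = if n = k then 1 else 0)
include hbio

theorem apply_eq_of_seriesTendsTo {f : D} {a : ℕ → ℂ}
    (h : SeriesTendsTo (fun n => a n • ξ n) f) (k : ℕ) : S f (ξ k) = a k := by
  have hk := h.map (S.evalRight (ξ k)) (S.evalRight (ξ k)).continuous
  simp only [ContinuousLinearMap.evalRight_apply, map_smul, hbio,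
    smul_eq_mul, mul_ite, mul_one, mul_zero] at hk
  refine tendsto_nhds_unique hk ?_
  simpa using (hasSum_ite_eq k (a k)).tendsto_sum_nat

theorem hasSum_norm_sq_of_seriesTendsTo {f : D} {a : ℕ → ℂ}
    (h : SeriesTendsTo (fun n => a n • ξ n) f) :
    HasSum (fun k => ‖a k‖ ^ 2) (S f f).re ∧ ((S f f).re : ℂ) = S f f := by
  refine SeriesTendsTo.hasSum_re_of_ofReal (fun n => by positivity) ?_
  have hf := h.map (S f) (S f).continuous
  simp only [map_smulₛₗ, apply_eq_of_seriesTendsTo hbio h, smul_eq_mul, Complex.conj_mul'] at hf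
  simpa using hf

theorem memℓp_two_apply (hbasis : IsTopBasisSeq ξ) (f : D) : Memℓp (fun k => S f (ξ k)) 2 := by
  obtain ⟨a, ha, -⟩ := hbasis f
  refine memℓp_gen ?_
  simpa [Real.rpow_two, apply_eq_of_seriesTendsTo hbio ha]
    using (hasSum_norm_sq_of_seriesTendsTo hbio ha).1.summable

theorem eq_zero_of_forall_apply_eq_zero [T2Space D] (hbasis : IsTopBasisSeq ξ) {f : D}
    (hf : ∀ k, S f (ξ k) = 0) : f = 0 := by
  obtain ⟨a, ha, -⟩ := hbasis f
  have ha0 : a = 0 := funext fun k => (apply_eq_of_seriesTendsTo hbio ha k).symm.trans (hf k)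
  refine tendsto_nhds_unique ha ?_
  simp [ha0]

end Biorthogonal

theorem statement16_general {D H : Type*} [AddCommGroup D] [Module ℂ D]
    [TopologicalSpace D] [IsTopologicalAddGroup D] [ContinuousSMul ℂ D] [T2Space D]
    [BarrelledSpace ℂ D]
    [NormedAddCommGroup H] [InnerProductSpace ℂ H] [CompleteSpace H]
    [TopologicalSpace.SeparableSpace H] (hinfdim : ¬ FiniteDimensional ℂ H)
    (ξ : ℕ → D) (hbasis : IsTopBasisSeq ξ)
    (S : D →L[ℂ] (D →SL[starRingEnd ℂ] ℂ))
    (hbio : ∀ n k : ℕ, S (ξ n) (ξ k) = if n = k then 1 else 0) :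
    ∃ T : D →L[ℂ] H, Function.Injective T ∧ IsONBasisSeq (fun n => T (ξ n)) ∧
      ∀ (f : D) (a : ℕ → ℂ), SeriesTendsTo (fun n => a n • ξ n) f →
        HasSum (fun k => ‖a k‖ ^ 2) (‖T f‖ ^ 2) ∧ S f f = ((‖T f‖ ^ 2 : ℝ) : ℂ) := by
  obtain ⟨b⟩ := exists_hilbertBasis_nat (𝕜 := ℂ) hinfdim
  let φ k := S.evalRight (ξ k)
  have hφ : ∀ f, Memℓp (fun k => φ k f) 2 := memℓp_two_apply hbio hbasis
  let T := b.synthesisCLM φ hφ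
  have hTξ : ∀ n, T (ξ n) = b n := fun n =>
    b.synthesisCLM_eq_of_biorthogonal φ hφ fun k => hbio n k
  refine ⟨T, b.synthesisCLM_injective φ hφ fun f => eq_zero_of_forall_apply_eq_zero hbio hbasis,
    by simpa only [hTξ] using b.isONBasisSeq, fun f a ha => ?_⟩
  obtain ⟨hsum, hreal⟩ := hasSum_norm_sq_of_seriesTendsTo hbio ha
  have hφa : ∀ k, φ k f = a k := apply_eq_of_seriesTendsTo hbio ha
  have hnorm : HasSum (fun k => ‖a k‖ ^ 2) (‖T f‖ ^ 2) := by
    simpa only [hφa] using b.hasSum_norm_sq_synthesisCLM φ hφ f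
  exact ⟨hnorm, by rw [← hreal, hsum.unique hnorm]⟩

/-- Theorem 3.4, (iii) ⇒ (i), of Bellomonte–Trapani: assume `D` barreled. If `ξ` is a
topological basis of `D` and there exists a continuous linear `S : D[t] → D^×[t^×]` with
`(S ξ_n)(ξ_k) = δ_{nk}`, then `ξ` is a Riesz-like basis: there exists an injective continuous
linear `T : D[t] → H` such that `(T ξ_n)` is an orthonormal basis of `H`; moreover, if
`f = Σ_k a_k ξ_k ∈ D` then `(S f)(f) = Σ_k |a_k|²` and `‖T f‖² = Σ_k |a_k|²`. -/
theorem statement16 {D H : Type*} [AddCommGroup D] [Module ℂ D] [Module ℝ D] [IsScalarTower ℝ ℂ D]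
    [TopologicalSpace D] [IsTopologicalAddGroup D] [ContinuousSMul ℂ D] [T2Space D]
    [LocallyConvexSpace ℝ D] [BarrelledSpace ℂ D]
    [NormedAddCommGroup H] [InnerProductSpace ℂ H] [CompleteSpace H]
    [TopologicalSpace.SeparableSpace H] (hinfdim : ¬ FiniteDimensional ℂ H)
    (ξ : ℕ → D) (hbasis : IsTopBasisSeq ξ)
    (S : D →L[ℂ] (D →SL[starRingEnd ℂ] ℂ))
    (hbio : ∀ n k : ℕ, S (ξ n) (ξ k) = if n = k then 1 else 0) :
    ∃ T : D →L[ℂ] H, Function.Injective T ∧ IsONBasisSeq (fun n => T (ξ n)) ∧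
      ∀ (f : D) (a : ℕ → ℂ), SeriesTendsTo (fun n => a n • ξ n) f →
        HasSum (fun k => ‖a k‖ ^ 2) (‖T f‖ ^ 2) ∧ S f f = ((‖T f‖ ^ 2 : ℝ) : ℂ) :=
  statement16_general hinfdim ξ hbasis S hbio
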